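/- arXiv:1507.03055 — 4 statements merged into one kernel-verified Lean document; each statement's English description precedes it below -/
import Mathlib

section
/- For every nonnegative integer n, Σ_{k=0}^n C(n,k)(-1)^{k+1} (E_k(1/2) - 1/2^k) = E_n(1/2) - 1/2^n; that is, the sequence E_n(1/2) - 1/2^n is self-dual with respect to the transform a_n ↦ Σ_{k=0}^n C(n,k)(-1)^{k+1} a_k. -/
open Finset

/-- Bernoulli polynomials evaluated at a real number. -/
noncomputable def bernoulliPoly (n : ℕ) (x : ℝ) : ℝ :=
  ((Polynomial.bernoulli n).map (algebraMap ℚ ℝ)).eval x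

/-- Euler polynomials `E_n(x)` defined via `2 e^{xt}/(e^t+1) = ∑ E_n(x) t^n/n!`. -/
noncomputable def eulerPoly (n : ℕ) (x : ℝ) : ℝ :=
  (n.factorial : ℝ) * PowerSeries.coeff (R := ℝ) n
    (2 * PowerSeries.mk (fun k => x ^ k / (k.factorial : ℝ)) * (PowerSeries.exp ℝ + 1)⁻¹)

/-!
With `a n = E_n(1/2) - 1/2^n`, the exponential generating function of `a` is
`2 e^{t/2}/(e^t + 1) - e^{t/2} = -e^{t/2} tanh(t/2)`. The transform
`a ↦ (∑ k, C(n,k) (-1)^(k+1) a k)_n` multiplies generating functions as `A(t) ↦ -e^t A(-t)`,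
and `-e^t A(-t) = A(t)` because `tanh` is odd.
-/

namespace PowerSeries

section BinomialTransform

variable {A : Type*} [CommRing A] [Algebra ℚ A]

theorem natCast_factorial_mul_coeff_exp (n : ℕ) : (n.factorial : A) * coeff n (exp A) = 1 := by
  rw [coeff_exp, ← map_natCast (algebraMap ℚ A), ← map_mul,
    mul_one_div_cancel (Nat.cast_ne_zero.2 n.factorial_ne_zero), map_one]

theorem sum_choose_mul_factorial_mul_coeff_eq_coeff_exp_mul (F : A⟦X⟧) (n : ℕ) :
    ∑ k ∈ range (n + 1), (n.choose k : A) * (k.factorial * coeff k F) =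
      n.factorial * coeff n (exp A * F) := by
  rw [coeff_mul, Nat.sum_antidiagonal_eq_sum_range_succ (fun i j => coeff i (exp A) * coeff j F),
    mul_sum, ← sum_range_reflect]
  refine sum_congr rfl fun k hk => ?_
  have hkn : k ≤ n := Nat.lt_succ_iff.1 (mem_range.1 hk)
  rw [Nat.add_sub_cancel, Nat.choose_symm hkn, ← Nat.choose_mul_factorial_mul_factorial hkn]
  push_cast
  linear_combination -(n.choose k * (n - k).factorial * coeff (n - k) F : A) *
    natCast_factorial_mul_coeff_exp (A := A) k

end BinomialTransform

section Field

variable (K : Type*) [Field K] [CharZero K]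

noncomputable def tanhHalf : K⟦X⟧ := (exp K - 1) * (exp K + 1)⁻¹

theorem constantCoeff_exp_add_one_ne_zero : constantCoeff (exp K + 1) ≠ 0 := by
  rw [map_add, constantCoeff_exp, map_one]
  norm_num

theorem tanhHalf_mul_exp_add_one : tanhHalf K * (exp K + 1) = exp K - 1 := by
  rw [tanhHalf, mul_assoc, PowerSeries.inv_mul_cancel _ (constantCoeff_exp_add_one_ne_zero K),
    mul_one]

theorem evalNegHom_tanhHalf : evalNegHom (tanhHalf K) = -tanhHalf K := by
  have hneg : evalNegHom (tanhHalf K) * (evalNegHom (exp K) + 1) = evalNegHom (exp K) - 1 := by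
    simpa using congrArg evalNegHom (tanhHalf_mul_exp_add_one K)
  have h := constantCoeff_exp_add_one_ne_zero K
  calc evalNegHom (tanhHalf K)
      = evalNegHom (tanhHalf K) * (exp K + 1) * (exp K + 1)⁻¹ := by
        rw [mul_assoc, PowerSeries.mul_inv_cancel _ h, mul_one]
    _ = (1 - exp K) * (exp K + 1)⁻¹ := by
        congr 1
        linear_combination
          exp K * hneg + (1 - evalNegHom (tanhHalf K)) * exp_mul_exp_neg_eq_one (A := K)
    _ = -tanhHalf K := by rw [tanhHalf]; ring

variable {K}

theorem exp_mul_evalNegHom_rescale_half_exp :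
    exp K * evalNegHom (rescale (1 / 2 : K) (exp K)) = rescale (1 / 2 : K) (exp K) := by
  have h := exp_mul_exp_eq_exp_add (1 : K) (-(1 / 2))
  rw [rescale_one, RingHom.id_apply] at h
  rw [evalNegHom, rescale_rescale, mul_neg_one, h]
  norm_num

theorem exp_mul_evalNegHom_rescale_half_exp_mul {F : K⟦X⟧} (hF : evalNegHom F = -F) :
    exp K * evalNegHom (rescale (1 / 2 : K) (exp K) * F) = -(rescale (1 / 2 : K) (exp K) * F) := by
  rw [map_mul, hF, ← mul_assoc, exp_mul_evalNegHom_rescale_half_exp, mul_neg]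

theorem mk_pow_div_factorial_eq_rescale_exp (x : K) :
    mk (fun k => x ^ k / (k.factorial : K)) = rescale x (exp K) := by
  ext k
  simp [coeff_rescale, coeff_exp, div_eq_mul_inv]

end Field

end PowerSeries

open PowerSeries

theorem eulerPoly_half_sub_one_div_two_pow (k : ℕ) :
    eulerPoly k (1 / 2) - 1 / 2 ^ k =
      -(k.factorial * coeff k (rescale (1 / 2 : ℝ) (exp ℝ) * tanhHalf ℝ)) := by
  have hsplit : 2 * rescale (1 / 2 : ℝ) (exp ℝ) * (exp ℝ + 1)⁻¹ =
      rescale (1 / 2 : ℝ) (exp ℝ) - rescale (1 / 2 : ℝ) (exp ℝ) * tanhHalf ℝ := by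
    have h := PowerSeries.mul_inv_cancel _ (constantCoeff_exp_add_one_ne_zero ℝ)
    rw [tanhHalf]
    linear_combination rescale (1 / 2 : ℝ) (exp ℝ) * h
  rw [eulerPoly, mk_pow_div_factorial_eq_rescale_exp, hsplit, map_sub, coeff_rescale, one_div_pow]
  linear_combination (1 / 2 ^ k : ℝ) * natCast_factorial_mul_coeff_exp (A := ℝ) k

theorem stmt3 (n : ℕ) :
    ∑ k ∈ Finset.range (n + 1),
        (n.choose k : ℝ) * (-1) ^ (k + 1) * (eulerPoly k (1 / 2) - 1 / 2 ^ k) =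
      eulerPoly n (1 / 2) - 1 / 2 ^ n := by
  set A := rescale (1 / 2 : ℝ) (exp ℝ) * tanhHalf ℝ
  calc ∑ k ∈ range (n + 1), (n.choose k : ℝ) * (-1) ^ (k + 1) * (eulerPoly k (1 / 2) - 1 / 2 ^ k)
      = ∑ k ∈ range (n + 1), (n.choose k : ℝ) * (k.factorial * coeff k (evalNegHom A)) := by
        refine sum_congr rfl fun k _ => ?_
        rw [eulerPoly_half_sub_one_div_two_pow, evalNegHom, coeff_rescale]
        ring
    _ = n.factorial * coeff n (exp ℝ * evalNegHom A) :=
        sum_choose_mul_factorial_mul_coeff_eq_coeff_exp_mul _ n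
    _ = eulerPoly n (1 / 2) - 1 / 2 ^ n := by
        rw [exp_mul_evalNegHom_rescale_half_exp_mul (evalNegHom_tanhHalf ℝ), map_neg,
          eulerPoly_half_sub_one_div_two_pow]
        ring
end

section
/- For every nonnegative integer n, Σ_{k=0}^n C(n,k)(-1)^n (-1)^k B_k = B_n + (-1)^n n. -/
open Finset

/-!
The signs `(-1) ^ k B_k` are the Bernoulli numbers `B'_k = B_k (-1) ^ k` of the opposite
convention (`B'_1 = 1/2`), whose recurrence `∑_{k<n} C(n,k) B'_k = n` evaluates the sum;
the remaining term `(-1) ^ n B'_n` is `B_n`.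
-/

theorem sum_range_succ_choose_mul_bernoulli' (n : ℕ) :
    ∑ k ∈ range (n + 1), (n.choose k : ℚ) * bernoulli' k = n + bernoulli' n := by
  rw [sum_range_succ, sum_bernoulli', Nat.choose_self, Nat.cast_one, one_mul]

theorem stmt7 (n : ℕ) :
    ∑ k ∈ Finset.range (n + 1), (n.choose k : ℚ) * (-1) ^ n * ((-1) ^ k * bernoulli k) =
      bernoulli n + (-1) ^ n * n := by
  calc ∑ k ∈ range (n + 1), (n.choose k : ℚ) * (-1) ^ n * ((-1) ^ k * bernoulli k)
      = (-1) ^ n * ∑ k ∈ range (n + 1), (n.choose k : ℚ) * bernoulli' k := by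
        rw [mul_sum]
        refine sum_congr rfl fun k _ => ?_
        rw [bernoulli'_eq_bernoulli]
        ring
    _ = (-1) ^ n * (n + bernoulli' n) := by rw [sum_range_succ_choose_mul_bernoulli']
    _ = bernoulli n + (-1) ^ n * n := by rw [bernoulli]; ring
end

section
/- Let a: ℕ → ℝ be a sequence with exponential generating function a*(x) = Σ_{n≥0} a_n x^n/n! (as a formal power series). Then -a_n = Σ_{k=0}^n C(n,k)(-1)^n a_k for all n if and only if a*(x)e^{x/2} is an odd formal power series. -/
/-! Substituting `X ↦ -X` turns `e^{X/2}` into its inverse `e^{-X/2}`, so after multiplying by the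
unit `e^{X/2}`, oddness of `a*(X) e^{X/2}` says `a*(-X) = -a*(X) e^X`. The coefficient of
`X^n / n!` on the right is the binomial transform `-∑ C(n,k) a_k`, on the left `(-1)^n a_n`. -/

open Finset

namespace PowerSeries

variable {A : Type*} [CommRing A] [Algebra ℚ A]

theorem rescale_exp_mul_rescale_neg_exp (c : A) :
    rescale c (exp A) * rescale (-c) (exp A) = 1 := by
  rw [exp_mul_exp_eq_exp_add, add_neg_cancel, rescale_zero_apply, constantCoeff_exp, map_one]

theorem rescale_neg_one_mul_rescale_exp_eq_neg_iff (f : A⟦X⟧) (c : A) :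
    rescale (-1) (f * rescale c (exp A)) = -(f * rescale c (exp A)) ↔
      rescale (-1) f = -(f * rescale (c + c) (exp A)) := by
  have hunit : IsUnit (rescale c (exp A)) :=
    IsUnit.of_mul_eq_one _ (rescale_exp_mul_rescale_neg_exp c)
  rw [← hunit.mul_left_inj, map_mul, rescale_rescale, mul_neg_one, mul_assoc,
    mul_comm (rescale (-c) _), rescale_exp_mul_rescale_neg_exp, mul_one, neg_mul, mul_assoc,
    exp_mul_exp_eq_exp_add]

theorem coeff_mk_div_factorial_mul_exp {K : Type*} [Field K] [CharZero K] (a : ℕ → K) (n : ℕ) :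
    coeff n (mk (fun k => a k / (k.factorial : K)) * exp K) =
      (∑ k ∈ range (n + 1), (n.choose k : K) * a k) / (n.factorial : K) := by
  rw [coeff_mul, Nat.sum_antidiagonal_eq_sum_range_succ_mk, sum_div]
  refine sum_congr rfl fun k hk => ?_
  rw [coeff_mk, coeff_exp, map_div₀, map_one, map_natCast,
    Nat.cast_choose K (Nat.lt_succ_iff.mp (mem_range.mp hk))]
  have := Nat.cast_ne_zero (R := K) |>.mpr n.factorial_ne_zero
  have := Nat.cast_ne_zero (R := K) |>.mpr k.factorial_ne_zero
  have := Nat.cast_ne_zero (R := K) |>.mpr (n - k).factorial_ne_zero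
  field_simp

end PowerSeries

theorem stmt14 (a : ℕ → ℝ) :
    (∀ n, -a n = ∑ k ∈ Finset.range (n + 1), (n.choose k : ℝ) * (-1) ^ n * a k) ↔
      PowerSeries.rescale (-1 : ℝ)
          (PowerSeries.mk (fun n => a n / (n.factorial : ℝ)) *
            PowerSeries.rescale (1 / 2 : ℝ) (PowerSeries.exp ℝ)) =
        -(PowerSeries.mk (fun n => a n / (n.factorial : ℝ)) *
          PowerSeries.rescale (1 / 2 : ℝ) (PowerSeries.exp ℝ)) := by
  rw [PowerSeries.rescale_neg_one_mul_rescale_exp_eq_neg_iff, add_halves, PowerSeries.rescale_one,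
    RingHom.id_apply, PowerSeries.ext_iff]
  refine forall_congr' fun n => ?_
  rw [PowerSeries.coeff_rescale, map_neg, PowerSeries.coeff_mk_div_factorial_mul_exp,
    PowerSeries.coeff_mk, mul_div_assoc', ← neg_div, div_left_inj' (Nat.cast_ne_zero.mpr n.factorial_ne_zero)]
  simp_rw [mul_comm _ ((-1 : ℝ) ^ n), mul_assoc, ← mul_sum]
  rcases neg_one_pow_eq_or ℝ n with h | h <;> rw [h] <;> constructor <;> intro <;> linarith
end

section
/- Suppose a: ℕ → ℝ satisfies -a_n = Σ_{k=0}^n C(n,k)(-1)^n a_k for all n (self-dual with respect to D₄). Then for any function f: ℕ → ℝ and all n ≥ 0, Σ_{k=0}^n C(n,k) (f(k) + Σ_{j=0}^k (-1)^{n-j} C(k,j) f(j)) a_{n-k} = 0. -/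
open Finset

/-! Write `(f ⋆ g)(n) = ∑ C(n,k) f(k) g(n-k)` for the binomial convolution (the product of
exponential generating functions), `ε(m) = (-1)^m` and `(εa)(m) = (-1)^m a(m)`. Splitting
`(-1)^(n-j) = (-1)^(k-j) (-1)^(n-k)`, the double sum is `((f ⋆ ε) ⋆ εa)(n)`, which by associativity
is `(f ⋆ (ε ⋆ εa))(n)`. Now `(ε ⋆ εa)(m)` is `(-1)^m` times the binomial transform of `a`, i.e. `-a(m)`
by self-duality, so the whole sum is `(f ⋆ a)(n) - (f ⋆ a)(n) = 0`. -/

variable {R : Type*}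

def binomialConv [CommSemiring R] (f g : ℕ → R) (n : ℕ) : R :=
  ∑ p ∈ antidiagonal n, n.choose p.1 * f p.1 * g p.2

section CommSemiring

variable [CommSemiring R]

theorem binomialConv_eq_sum_range (f g : ℕ → R) (n : ℕ) :
    binomialConv f g n = ∑ k ∈ range (n + 1), n.choose k * f k * g (n - k) :=
  Nat.sum_antidiagonal_eq_sum_range_succ_mk _ n

theorem binomialConv_assoc (f g h : ℕ → R) :
    binomialConv (binomialConv f g) h = binomialConv f (binomialConv g h) := by
  ext n
  simp only [binomialConv, sum_mul, mul_sum, sum_sigma']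
  refine sum_nbij' (fun x => ⟨(x.2.1, x.2.2 + x.1.2), (x.2.2, x.1.2)⟩)
    (fun x => ⟨(x.1.1 + x.2.1, x.2.2), (x.1.1, x.2.1)⟩) ?_ ?_ ?_ ?_ ?_
  · rintro ⟨⟨k, l⟩, j, i⟩ hx
    simp only [mem_sigma, HasAntidiagonal.mem_antidiagonal, and_true] at hx ⊢
    omega
  · rintro ⟨⟨j, m⟩, i, l⟩ hx
    simp only [mem_sigma, HasAntidiagonal.mem_antidiagonal, and_true] at hx ⊢
    omega
  · rintro ⟨⟨k, l⟩, j, i⟩ hx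
    obtain ⟨-, rfl⟩ : k + l = n ∧ j + i = k := by simpa using hx
    rfl
  · rintro ⟨⟨j, m⟩, i, l⟩ hx
    obtain ⟨-, rfl⟩ : j + m = n ∧ i + l = m := by simpa using hx
    rfl
  · rintro ⟨⟨k, l⟩, j, i⟩ hx
    obtain ⟨rfl, rfl⟩ : k + l = n ∧ j + i = k := by simpa using hx
    have hc : (j + i + l).choose (j + i) * (j + i).choose j =
        (j + i + l).choose j * (i + l).choose i := by
      simpa [add_assoc] using Nat.choose_mul (n := j + i + l) (Nat.le_add_right j i)
    calc _ = (((j + i + l).choose (j + i) * (j + i).choose j : ℕ) : R) * (f j * g i * h l) := by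
          push_cast; ring
      _ = _ := by rw [hc]; push_cast; ring

end CommSemiring

section CommRing

variable [CommRing R]

theorem binomialConv_neg_right (f g : ℕ → R) : binomialConv f (-g) = -binomialConv f g := by
  ext n
  simp [binomialConv]

theorem binomialConv_neg_one_pow (a : ℕ → R) (n : ℕ) :
    binomialConv (fun m => (-1) ^ m) (fun m => (-1) ^ m * a m) n =
      (-1) ^ n * ∑ k ∈ range (n + 1), n.choose k * a k := by
  rw [← Nat.sum_antidiagonal_eq_sum_range_succ (fun k _ => (n.choose k : R) * a k),
    ← Nat.sum_antidiagonal_swap, binomialConv, mul_sum]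
  refine sum_congr rfl fun ⟨i, j⟩ hij => ?_
  obtain rfl : i + j = n := HasAntidiagonal.mem_antidiagonal.mp hij
  rw [pow_add, Nat.choose_symm_add, Prod.swap_prod_mk]
  ring

theorem sum_choose_mul_sum_neg_one_pow_eq_binomialConv (f g : ℕ → R) (n : ℕ) :
    ∑ k ∈ range (n + 1), (n.choose k : R) *
        (∑ j ∈ range (k + 1), (-1) ^ (n - j) * (k.choose j : R) * f j) * g (n - k) =
      binomialConv (binomialConv f fun m => (-1) ^ m) (fun m => (-1) ^ m * g m) n := by
  simp only [binomialConv_eq_sum_range]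
  refine sum_congr rfl fun k hk => ?_
  simp only [mul_sum, sum_mul]
  refine sum_congr rfl fun j hj => ?_
  have hkn : k ≤ n := Nat.lt_succ_iff.mp (mem_range.mp hk)
  have hjk : j ≤ k := Nat.lt_succ_iff.mp (mem_range.mp hj)
  rw [show n - j = (k - j) + (n - k) by omega, pow_add]
  ring

end CommRing

theorem stmt16 (a : ℕ → ℝ)
    (ha : ∀ n, -a n = ∑ k ∈ Finset.range (n + 1), (n.choose k : ℝ) * (-1) ^ n * a k)
    (f : ℕ → ℝ) (n : ℕ) :
    ∑ k ∈ Finset.range (n + 1), (n.choose k : ℝ) *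
        (f k + ∑ j ∈ Finset.range (k + 1), (-1) ^ (n - j) * (k.choose j : ℝ) * f j) *
        a (n - k) = 0 := by
  have hdual : binomialConv (fun m => (-1) ^ m) (fun m => (-1) ^ m * a m) = -a := by
    ext m
    rw [binomialConv_neg_one_pow, Pi.neg_apply, ha, mul_sum]
    exact sum_congr rfl fun k _ => by ring
  simp only [mul_add, add_mul, sum_add_distrib]
  rw [← binomialConv_eq_sum_range, sum_choose_mul_sum_neg_one_pow_eq_binomialConv,
    binomialConv_assoc, hdual, binomialConv_neg_right, Pi.neg_apply, add_neg_cancel]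
end
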